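/- For every real number k₀, if a polynomial a(t,s) ∈ ℝ[t,s] divides α(t,s), divides β_{k₀}(t,s), and divides the product B(t)·B(s)·D(t)·D(s), then a is a unit (a nonzero constant). In other words, no nonconstant polynomial simultaneously divides gcd(α, β_{k₀}) and B(t)·B(s)·D(t)·D(s). -/

import Mathlib

/- In ℝ[t,s] (modelled as MvPolynomial (Fin 2) ℝ, with t = X 0 and s = X 1):
`inT p` is p(t), `inS p` is p(s). -/
noncomputable def inT (p : Polynomial ℝ) : MvPolynomial (Fin 2) ℝ :=
  Polynomial.aeval (MvPolynomial.X 0) p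

noncomputable def inS (p : Polynomial ℝ) : MvPolynomial (Fin 2) ℝ :=
  Polynomial.aeval (MvPolynomial.X 1) p

/-- α(t,s) = A(t)B(s) − A(s)B(t). -/
noncomputable def alphaPoly (A B : Polynomial ℝ) : MvPolynomial (Fin 2) ℝ :=
  inT A * inS B - inS A * inT B

/-- β_k(t,s) = C(t)D(s) − C(s)D(t) − 2kπ·D(t)D(s). -/
noncomputable def betaPoly (C D : Polynomial ℝ) (k : ℝ) : MvPolynomial (Fin 2) ℝ :=
  inT C * inS D - inS C * inT D -
    MvPolynomial.C (2 * k * Real.pi) * (inT D * inS D)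

/-! A prime factor `p` of `a` divides `B(t)B(s)` or `D(t)D(s)`; say the latter, and `p ∣ D(t)`.
Modulo `p`, `β_k` reduces to `C(t)D(s)`, and `p ∤ C(t)` because `C(t)` and `D(t)` are coprime,
so `p ∣ D(s)` as well (symmetrically if `p ∣ D(s)`). But a common divisor of a nonzero polynomial
in `t` alone and one in `s` alone involves no variable, hence is a unit. Since `α = β_0` for
`(A, B)`, the same argument handles `B`. -/

theorem Prime.dvd_of_dvd_mul_add_mul_of_isCoprime {R : Type*} [CommRing R] {p u v w z : R}
    (hp : Prime p) (huv : IsCoprime u v) (hv : p ∣ v) (h : p ∣ u * z + v * w) : p ∣ z := by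
  have huz : p ∣ u * z := (dvd_add_left (dvd_mul_of_dvd_left hv w)).mp h
  refine (hp.dvd_or_dvd huz).resolve_left fun hu ↦ hp.not_isUnit ?_
  exact huv.isUnit_of_dvd' hu hv

namespace MvPolynomial

variable {σ R : Type*}

theorem vars_subset_of_dvd [CommSemiring R] [NoZeroDivisors R] {p q : MvPolynomial σ R}
    (h : p ∣ q) (hq : q ≠ 0) : p.vars ⊆ q.vars := by
  obtain ⟨r, rfl⟩ := h
  intro i hi
  rw [mem_vars_iff_degreeOf_ne_zero] at hi ⊢
  rw [degreeOf_mul_eq (left_ne_zero_of_mul hq) (right_ne_zero_of_mul hq)]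
  omega

theorem isUnit_of_dvd_of_dvd_of_disjoint_vars [Field R] {p q r : MvPolynomial σ R}
    (hq : q ≠ 0) (hr : r ≠ 0) (hqr : Disjoint q.vars r.vars) (hpq : p ∣ q) (hpr : p ∣ r) :
    IsUnit p := by
  have hp : p ≠ 0 := by rintro rfl; exact hq (zero_dvd_iff.mp hpq)
  have hvars : p.vars = ∅ :=
    Finset.subset_empty.mp <| hqr (vars_subset_of_dvd hpq hq) (vars_subset_of_dvd hpr hr)
  have hC := vars_eq_empty_iff_eq_C.mp hvars
  rw [hC, isUnit_map_iff, isUnit_iff_ne_zero]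
  exact fun h0 ↦ hp (by rw [hC, h0, map_zero])

end MvPolynomial

theorem Polynomial.vars_toMvPolynomial_subset {σ R : Type*} [CommSemiring R] (i : σ)
    (p : Polynomial R) :
    (p.toMvPolynomial i).vars ⊆ {i} := by
  classical
  rw [toMvPolynomial_eq_rename_comp]
  refine (MvPolynomial.vars_rename _ _).trans fun j hj ↦ ?_
  obtain ⟨_, _, rfl⟩ := Finset.mem_image.mp hj
  exact Finset.mem_singleton_self i

theorem inT_ne_zero {f : Polynomial ℝ} (hf : f ≠ 0) : inT f ≠ 0 :=
  (map_ne_zero_iff _ (Polynomial.toMvPolynomial_injective 0)).mpr hf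

theorem inS_ne_zero {f : Polynomial ℝ} (hf : f ≠ 0) : inS f ≠ 0 :=
  (map_ne_zero_iff _ (Polynomial.toMvPolynomial_injective 1)).mpr hf

theorem isUnit_of_dvd_inT_of_dvd_inS {p : MvPolynomial (Fin 2) ℝ} {f g : Polynomial ℝ}
    (hf : f ≠ 0) (hg : g ≠ 0) (hpf : p ∣ inT f) (hpg : p ∣ inS g) : IsUnit p := by
  refine MvPolynomial.isUnit_of_dvd_of_dvd_of_disjoint_vars (inT_ne_zero hf) (inS_ne_zero hg) ?_
    hpf hpg
  exact Finset.disjoint_of_subset_left (Polynomial.vars_toMvPolynomial_subset 0 f) <|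
    Finset.disjoint_of_subset_right (Polynomial.vars_toMvPolynomial_subset 1 g) (by decide)

theorem dvd_inT_and_dvd_inS_of_dvd_betaPoly {p : MvPolynomial (Fin 2) ℝ} {C D : Polynomial ℝ}
    {k : ℝ} (hCD : IsCoprime C D) (hp : Prime p) (hβ : p ∣ betaPoly C D k)
    (hden : p ∣ inT D * inS D) : p ∣ inT D ∧ p ∣ inS D := by
  have hT : IsCoprime (inT C) (inT D) :=
    hCD.map (Polynomial.aeval (MvPolynomial.X 0 : MvPolynomial (Fin 2) ℝ)).toRingHom
  have hS : IsCoprime (inS C) (inS D) :=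
    hCD.map (Polynomial.aeval (MvPolynomial.X 1 : MvPolynomial (Fin 2) ℝ)).toRingHom
  set c := MvPolynomial.C (2 * k * Real.pi)
  rcases hp.dvd_or_dvd hden with hTD | hSD
  · refine ⟨hTD, hp.dvd_of_dvd_mul_add_mul_of_isCoprime hT hTD (w := -inS C - c * inS D) ?_⟩
    convert hβ using 1
    simp only [betaPoly, c]; ring
  · refine ⟨?_, hSD⟩
    rw [← dvd_neg]
    refine hp.dvd_of_dvd_mul_add_mul_of_isCoprime hS hSD (w := inT C - c * inT D) ?_
    convert hβ using 1
    simp only [betaPoly, c]; ring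

theorem alphaPoly_eq_betaPoly_zero (A B : Polynomial ℝ) : alphaPoly A B = betaPoly A B 0 := by
  simp [alphaPoly, betaPoly]

theorem no_common_divisor_alpha_beta_denominators
    (A B C D : Polynomial ℝ) (hB : B ≠ 0) (hD : D ≠ 0)
    (hAB : IsCoprime A B) (hCD : IsCoprime C D) (k₀ : ℝ)
    (a : MvPolynomial (Fin 2) ℝ)
    (ha1 : a ∣ alphaPoly A B) (ha2 : a ∣ betaPoly C D k₀)
    (ha3 : a ∣ inT B * inS B * inT D * inS D) :
    IsUnit a := by
  by_contra ha
  have ha0 : a ≠ 0 := ne_zero_of_dvd_ne_zero (mul_ne_zero (mul_ne_zero (mul_ne_zero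
    (inT_ne_zero hB) (inS_ne_zero hB)) (inT_ne_zero hD)) (inS_ne_zero hD)) ha3
  obtain ⟨p, hirr, hpa⟩ := WfDvdMonoid.exists_irreducible_factor ha ha0
  have hp : Prime p := hirr.prime
  rw [mul_assoc] at ha3
  rcases hp.dvd_or_dvd (hpa.trans ha3) with hBB | hDD
  · rw [alphaPoly_eq_betaPoly_zero] at ha1
    obtain ⟨hT, hS⟩ := dvd_inT_and_dvd_inS_of_dvd_betaPoly hAB hp (hpa.trans ha1) hBB
    exact hp.not_isUnit (isUnit_of_dvd_inT_of_dvd_inS hB hB hT hS)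
  · obtain ⟨hT, hS⟩ := dvd_inT_and_dvd_inS_of_dvd_betaPoly hCD hp (hpa.trans ha2) hDD
    exact hp.not_isUnit (isUnit_of_dvd_inT_of_dvd_inS hD hD hT hS)
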